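/- There exists a constant C > 0 such that for every integer ℓ ≥ 1, Σ_{m=−ℓ}^{ℓ} A_{ℓ,m}² ≤ C·ℓ. -/

import Mathlib

open Real Finset

/-- γ(x) = Γ(x/2 + 1/2) / Γ(x/2 + 1). -/
noncomputable def gam (x : ℝ) : ℝ := Real.Gamma (x/2 + 1/2) / Real.Gamma (x/2 + 1)

noncomputable def gg (k : ℕ) : ℝ := gam (2*k)

lemma gam_pos {x : ℝ} (hx : 0 ≤ x) : 0 < gam x := by
  unfold gam
  apply div_pos <;> apply Real.Gamma_pos_of_pos <;> linarith

lemma gg_zero : gg 0 = Real.sqrt π := by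
  unfold gg gam
  rw [show ((2:ℝ)*(0:ℕ))/2 + 1/2 = 1/2 by norm_num,
    show ((2:ℝ)*(0:ℕ))/2 + 1 = 1 by norm_num, Real.Gamma_one_half_eq, Real.Gamma_one, div_one]

lemma gg_rec (k : ℕ) : (2*(k:ℝ)+2) * gg (k+1) = (2*k+1) * gg k := by
  unfold gg gam
  have h1 : (2*((k:ℝ)+1))/2 + 1/2 = ((k:ℝ) + 1/2) + 1 := by ring
  have h2 : (2*((k:ℝ)+1))/2 + 1 = ((k:ℝ) + 1) + 1 := by ring
  push_cast
  rw [h1, h2, Real.Gamma_add_one (by positivity), Real.Gamma_add_one (by positivity)]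
  have hp : 0 < Real.Gamma ((k:ℝ) + 1) := Real.Gamma_pos_of_pos (by positivity)
  field_simp

noncomputable def TT (n : ℕ) : ℝ := ∑ k ∈ Finset.range (n+1), gg k * gg (n-k)

lemma core (n : ℕ) : 2 * ∑ k ∈ Finset.range (n+1), (k:ℝ) * (gg k * gg (n-k)) = n * TT n := by
  have h := Finset.sum_range_reflect (fun j => (j:ℝ) * (gg j * gg (n-j))) (n+1)
  unfold TT
  rw [two_mul]
  nth_rewrite 1 [← h]
  rw [← Finset.sum_add_distrib, Finset.mul_sum]
  apply Finset.sum_congr rfl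
  intro j hj
  have hjn : j ≤ n := Nat.lt_succ_iff.mp (Finset.mem_range.mp hj)
  have h1 : n + 1 - 1 - j = n - j := by omega
  have h2 : n - (n - j) = j := by omega
  have h3 : ((n - j : ℕ) : ℝ) = (n:ℝ) - j := by
    rw [Nat.cast_sub hjn]
  simp only [h1, h2, h3]
  ring

lemma hU (n : ℕ) : ∑ k ∈ Finset.range (n+1), (2*(k:ℝ)+1) * (gg k * gg (n-k)) = ((n:ℝ)+1) * TT n := by
  have hc := core n
  have h1 : ∑ k ∈ Finset.range (n+1), (2*(k:ℝ)+1) * (gg k * gg (n-k))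
      = 2*∑ k ∈ Finset.range (n+1), (k:ℝ)*(gg k * gg (n-k))
        + ∑ k ∈ Finset.range (n+1), gg k * gg (n-k) := by
    rw [Finset.mul_sum, ← Finset.sum_add_distrib]
    apply Finset.sum_congr rfl
    intros; ring
  rw [h1, hc]
  show (n:ℝ) * TT n + TT n = _
  ring

lemma TT_succ (n : ℕ) : TT (n+1) = TT n := by
  have hV : ∑ j ∈ Finset.range (n+2), 2*(j:ℝ)*(gg j * gg (n+1-j)) = ((n:ℝ)+1) * TT n := by
    rw [Finset.sum_range_succ' (fun j => 2*(j:ℝ)*(gg j * gg (n+1-j))) (n+1)]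
    simp only [Nat.cast_zero, mul_zero, zero_mul, add_zero, Nat.cast_add, Nat.cast_one]
    rw [← hU n]
    apply Finset.sum_congr rfl
    intro k _
    have hr := gg_rec k
    have h4 : n + 1 - (k + 1) = n - k := by omega
    rw [h4]
    linear_combination (gg (n-k)) * gg_rec k
  have hc := core (n+1)
  have h2 : (2:ℝ) * ∑ j ∈ Finset.range (n+2), (j:ℝ) * (gg j * gg (n+1-j))
      = ∑ j ∈ Finset.range (n+2), 2*(j:ℝ)*(gg j * gg (n+1-j)) := by
    rw [Finset.mul_sum]; apply Finset.sum_congr rfl; intros; ring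
  have hcast : ((n+1 : ℕ):ℝ) = (n:ℝ)+1 := by push_cast; ring
  rw [hcast] at hc
  rw [h2, hV] at hc
  have hne : ((n:ℝ)+1) ≠ 0 := by positivity
  field_simp at hc
  linarith

lemma TT_eq (n : ℕ) : TT n = π := by
  induction n with
  | zero =>
    unfold TT
    simp [gg_zero]
    exact Real.mul_self_sqrt Real.pi_pos.le
  | succ n ih => rw [TT_succ, ih]


/-- A_{ℓ,m} = sqrt(((2ℓ+1)/π)·γ(ℓ−m)·γ(ℓ+m)) if |m| ≤ ℓ and ℓ−m is even, else 0. -/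
noncomputable def Acoef (ℓ : ℕ) (m : ℤ) : ℝ :=
  if |m| ≤ (ℓ : ℤ) ∧ Even ((ℓ : ℤ) - m) then
    Real.sqrt ((2*(ℓ:ℝ)+1)/Real.pi * gam ((ℓ : ℝ) - (m : ℝ)) * gam ((ℓ : ℝ) + (m : ℝ)))
  else 0

theorem sum_Acoef_sq_le :
    ∃ C > 0, ∀ ℓ : ℕ, 1 ≤ ℓ →
      ∑ m ∈ Finset.Icc (-(ℓ:ℤ)) (ℓ:ℤ), (Acoef ℓ m)^2 ≤ C * ℓ := by
  refine ⟨3, by norm_num, ?_⟩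
  intro ℓ hℓ
  set s : Finset ℤ := (Finset.range (ℓ+1)).image (fun k : ℕ => (ℓ:ℤ) - 2*k) with hs
  have hsub : s ⊆ Finset.Icc (-(ℓ:ℤ)) ℓ := by
    intro m hm
    simp only [hs, Finset.mem_image, Finset.mem_range] at hm
    obtain ⟨k, hk, rfl⟩ := hm
    simp only [Finset.mem_Icc]
    omega
  have hzero : ∀ m ∈ Finset.Icc (-(ℓ:ℤ)) ℓ, m ∉ s → (Acoef ℓ m)^2 = 0 := by
    intro m hm hms
    simp only [Finset.mem_Icc] at hm
    rw [Acoef, if_neg]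
    · ring
    rintro ⟨h1, h2⟩
    apply hms
    obtain ⟨r, hr⟩ := h2
    simp only [hs, Finset.mem_image, Finset.mem_range]
    exact ⟨r.toNat, by omega, by omega⟩
  rw [← Finset.sum_subset hsub hzero]
  have hinj : ∀ a ∈ Finset.range (ℓ+1), ∀ b ∈ Finset.range (ℓ+1),
      (ℓ:ℤ) - 2*a = (ℓ:ℤ) - 2*b → a = b := by
    intro a _ b _ h; omega
  rw [hs, Finset.sum_image hinj]
  have hterm : ∀ k ∈ Finset.range (ℓ+1),
      (Acoef ℓ ((ℓ:ℤ) - 2*k))^2 = (2*(ℓ:ℝ)+1)/π * (gg k * gg (ℓ-k)) := by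
    intro k hk
    have hk' : k ≤ ℓ := Nat.lt_succ_iff.mp (Finset.mem_range.mp hk)
    have e1 : (ℓ:ℝ) - (((ℓ:ℤ) - 2*(k:ℕ) : ℤ):ℝ) = 2*(k:ℕ) := by push_cast; ring
    have e2 : (ℓ:ℝ) + (((ℓ:ℤ) - 2*(k:ℕ) : ℤ):ℝ) = 2*((ℓ-k : ℕ):ℝ) := by
      push_cast [hk']; ring
    rw [Acoef, if_pos, e1, e2, Real.sq_sqrt]
    · unfold gg; ring
    · have g1 : 0 < gam (2*((k:ℕ):ℝ)) := gam_pos (by positivity)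
      have g2 : 0 < gam (2*(((ℓ-k : ℕ)):ℝ)) := gam_pos (by positivity)
      have : (0:ℝ) < (2*(ℓ:ℝ)+1)/π := by positivity
      positivity
    · constructor
      · rw [abs_le]; omega
      · exact ⟨(k:ℤ), by ring⟩
  rw [Finset.sum_congr rfl hterm, ← Finset.mul_sum,
    show ∑ k ∈ Finset.range (ℓ+1), (gg k * gg (ℓ-k)) = π from TT_eq ℓ,
    div_mul_cancel₀ _ (Real.pi_ne_zero)]
  have h1 : (1:ℝ) ≤ (ℓ:ℝ) := by exact_mod_cast hℓ
  linarith
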